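/- Let π be a linked partition in NCL(n) such that π̂ = 1_n, and let A be a block of π with 1 ∉ A. Then min(A) is doubly-covered by π. -/

import Mathlib

open scoped Classical

/-- The minimum of a finset of naturals (`0` if empty). -/
noncomputable def fmin (A : Finset ℕ) : ℕ := sInf (A : Set ℕ)

/-- The maximum of a finset of naturals (`0` if empty). -/
noncomputable def fmax (A : Finset ℕ) : ℕ := sSup (A : Set ℕ)

/-- `α` is a partition of the finite set `F ⊆ ℕ`. -/
def IsPartitionOfSet (F : Finset ℕ) (α : Finset (Finset ℕ)) : Prop :=
  (∀ V ∈ α, V.Nonempty) ∧ (∀ V ∈ α, V ⊆ F) ∧ (∀ m ∈ F, ∃ V ∈ α, m ∈ V) ∧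
    ∀ V ∈ α, ∀ W ∈ α, V ≠ W → V ∩ W = ∅

/-- `α` is a partition of `{1,…,n}`. -/
def IsPartitionOf (n : ℕ) (α : Finset (Finset ℕ)) : Prop :=
  IsPartitionOfSet (Finset.Icc 1 n) α

/-- Two distinct blocks of the family `π` cross: there are `a < b < c < d` with
`a, c` in one block and `b, d` in a different block. -/
def IsCrossing (π : Finset (Finset ℕ)) : Prop :=
  ∃ A ∈ π, ∃ B ∈ π, A ≠ B ∧
    ∃ a ∈ A, ∃ b ∈ B, ∃ c ∈ A, ∃ d ∈ B, a < b ∧ b < c ∧ c < d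

/-- `α ∈ NC(n)`: a non-crossing partition of `{1,…,n}`. -/
def IsNCPartition (n : ℕ) (α : Finset (Finset ℕ)) : Prop :=
  IsPartitionOf n α ∧ ¬ IsCrossing α

/-- Reverse refinement order `α ≤ β`: every block of `α` is contained in a block of `β`
(equivalently, every block of `β` is a union of blocks of `α`). -/
def Refines (α β : Finset (Finset ℕ)) : Prop := ∀ V ∈ α, ∃ W ∈ β, V ⊆ W

/-- The partial order `α ≪ β`: `α ≤ β` and for every block `W` of `β` there is a block
`V` of `α` containing both `min W` and `max W`. -/
def LL (α β : Finset (Finset ℕ)) : Prop :=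
  Refines α β ∧ ∀ W ∈ β, ∃ V ∈ α, fmin W ∈ V ∧ fmax W ∈ V

/-- A block `V` (of `α`) is `β`-special: some block `W` of `β` has the same min and max. -/
def SpecialBlock (β : Finset (Finset ℕ)) (V : Finset ℕ) : Prop :=
  ∃ W ∈ β, fmin V = fmin W ∧ fmax V = fmax W

/-- `V` is an outer block of `α`: no block of `α` strictly nests around it. -/
def OuterBlock (α : Finset (Finset ℕ)) (V : Finset ℕ) : Prop :=
  ∀ V' ∈ α, ¬ (fmin V' < fmin V ∧ fmax V < fmax V')

/-- `π` is a linked partition of the finite set `F ⊆ ℕ`. -/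
def IsLinkedPartitionOfSet (F : Finset ℕ) (π : Finset (Finset ℕ)) : Prop :=
  (∀ A ∈ π, A.Nonempty) ∧ (∀ A ∈ π, A ⊆ F) ∧ (∀ m ∈ F, ∃ A ∈ π, m ∈ A) ∧
    ∀ A ∈ π, ∀ B ∈ π, A ≠ B →
      A ∩ B = ∅ ∨
        (2 ≤ A.card ∧ 2 ≤ B.card ∧ (A ∩ B).card = 1 ∧ fmin A ≠ fmin B ∧
          ∀ x ∈ A ∩ B, x = fmin A ∨ x = fmin B)

/-- `π ∈ NCL(F)`: a non-crossing linked partition of the finite set `F`. -/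
def IsNCLOfSet (F : Finset ℕ) (π : Finset (Finset ℕ)) : Prop :=
  IsLinkedPartitionOfSet F π ∧ ¬ IsCrossing π

/-- `π ∈ NCL(n)`: a non-crossing linked partition of `{1,…,n}`. -/
def IsNCL (n : ℕ) (π : Finset (Finset ℕ)) : Prop :=
  IsNCLOfSet (Finset.Icc 1 n) π

/-- The number of blocks of `π` containing `m`. -/
noncomputable def coverCount (π : Finset (Finset ℕ)) (m : ℕ) : ℕ :=
  (π.filter fun A => m ∈ A).card

/-- `m` is singly-covered by `π`: it lies in exactly one block. -/
def SinglyCovered (π : Finset (Finset ℕ)) (m : ℕ) : Prop := coverCount π m = 1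

/-- `m` is doubly-covered by `π`: it lies in exactly two blocks. -/
def DoublyCovered (π : Finset (Finset ℕ)) (m : ℕ) : Prop := coverCount π m = 2

/-- The partition `π̂` generated by the blocks of `π`: its blocks are the connected
components of the ground set under the relation of lying in a common block of `π`. -/
noncomputable def genPart (π : Finset (Finset ℕ)) : Finset (Finset ℕ) :=
  (π.sup id).image fun m =>
    (π.sup id).filter fun x =>
      Relation.EqvGen (fun a b => ∃ A ∈ π, a ∈ A ∧ b ∈ A) m x

/-- The unlinking `π̌` of a linked partition `π`. -/
noncomputable def unlink (π : Finset (Finset ℕ)) : Finset (Finset ℕ) :=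
  π.image fun A => if SinglyCovered π (fmin A) then A else A.erase (fmin A)

/-- The block of `α` containing `m` (empty if there is none). -/
noncomputable def blockOf (α : Finset (Finset ℕ)) (m : ℕ) : Finset ℕ :=
  (α.filter fun V => m ∈ V).sup id

/-- The successor of `m` in the cycle on the block `V` (elements in increasing order). -/
noncomputable def nextInBlock (V : Finset ℕ) (m : ℕ) : ℕ :=
  if m = fmax V then fmin V else fmin (V.filter fun x => m < x)

/-- The predecessor of `m` in the cycle on the block `V`. -/
noncomputable def prevInBlock (V : Finset ℕ) (m : ℕ) : ℕ :=
  if m = fmin V then fmax V else fmax (V.filter fun x => x < m)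

/-- The permutation `P_α` associated to a partition `α`, as a function: each block
`{i₁ < i₂ < ⋯ < iₘ}` becomes the cycle `i₁ ↦ i₂ ↦ ⋯ ↦ iₘ ↦ i₁`. -/
noncomputable def permOf (α : Finset (Finset ℕ)) (m : ℕ) : ℕ :=
  if m ∈ blockOf α m then nextInBlock (blockOf α m) m else m

/-- The inverse permutation `P_α⁻¹`, as a function. -/
noncomputable def permOfInv (α : Finset (Finset ℕ)) (m : ℕ) : ℕ :=
  if m ∈ blockOf α m then prevInBlock (blockOf α m) m else m

/-- The action `τ·α` of a map `τ` on a partition `α = {V₁,…,V_p}`, giving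
`{τ(V₁),…,τ(V_p)}`. -/
def mapPart (τ : ℕ → ℕ) (α : Finset (Finset ℕ)) : Finset (Finset ℕ) :=
  α.image fun V => V.image τ

/-- The cycled unlinking `π° := P_{π̂}⁻¹ · π̌`. -/
noncomputable def cycUnlink (π : Finset (Finset ℕ)) : Finset (Finset ℕ) :=
  mapPart (permOfInv (genPart π)) (unlink π)

/-- `NC(n)` as a finset. -/
noncomputable def NCF (n : ℕ) : Finset (Finset (Finset ℕ)) :=
  ((Finset.Icc 1 n).powerset.powerset).filter (IsNCPartition n)

/-- `NCL(n)` as a finset. -/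
noncomputable def NCLF (n : ℕ) : Finset (Finset (Finset ℕ)) :=
  ((Finset.Icc 1 n).powerset.powerset).filter (IsNCL n)

/-- The restriction `π|_E`: the blocks of `π` contained in `E`. -/
def restrictL (π : Finset (Finset ℕ)) (E : Finset ℕ) : Finset (Finset ℕ) :=
  π.filter fun A => A ⊆ E

/-- The partition `β₀` obtained from `β` by leaving blocks of size `≤ 2` intact and
breaking each block `W` with `|W| ≥ 3` into the doubleton `{min W, max W}` together
with `|W| - 2` singletons. -/
noncomputable def breakBlocks (β : Finset (Finset ℕ)) : Finset (Finset ℕ) :=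
  β.biUnion fun W =>
    if W.card ≤ 2 then {W}
    else insert {fmin W, fmax W} ((W \ {fmin W, fmax W}).image fun x => ({x} : Finset ℕ))

/-!
Every point lies in at most two blocks of a linked partition, so it suffices to rule out that
`m = min A` is singly-covered. In that case every block containing `m` has `m` as its minimum,
and then non-crossing and the linking condition make the gap from `m` up to the first return of
a block reaching below `m` a union of blocks. That gap contains `m` but not `1 < m`, so `π̂` would
not be connected.
-/

lemma fmin_le {A : Finset ℕ} {x : ℕ} (hx : x ∈ A) : fmin A ≤ x :=
  Nat.sInf_le (Finset.mem_coe.mpr hx)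

lemma fmin_mem {A : Finset ℕ} (h : A.Nonempty) : fmin A ∈ A :=
  Finset.mem_coe.mp (Nat.sInf_mem (Finset.coe_nonempty.mpr h))

lemma Relation.EqvGen.iff_of_forall {α : Type*} {r : α → α → Prop} {p : α → Prop}
    (h : ∀ x y, r x y → (p x ↔ p y)) {x y : α} (hxy : Relation.EqvGen r x y) : p x ↔ p y :=
  (Equivalence.eqvGen_iff (r := fun a b => p a ↔ p b)
    ⟨fun _ => Iff.rfl, Iff.symm, Iff.trans⟩).mp (hxy.mono h)

/-- The relation whose equivalence closure defines `genPart π`. -/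
def SameBlock (π : Finset (Finset ℕ)) (a b : ℕ) : Prop := ∃ A ∈ π, a ∈ A ∧ b ∈ A

lemma eqvGen_sameBlock_of_genPart_eq_singleton {π : Finset (Finset ℕ)} {G : Finset ℕ}
    (hgen : genPart π = {G}) {x y : ℕ} (hx : x ∈ G) (hy : y ∈ G) :
    Relation.EqvGen (SameBlock π) x y := by
  have hG : G ∈ genPart π := hgen ▸ Finset.mem_singleton_self G
  obtain ⟨z, -, rfl⟩ := Finset.mem_image.mp hG
  have hx' : x ∈ π.sup id := (Finset.mem_filter.mp hx).1
  have hcomp : (π.sup id).filter (Relation.EqvGen (SameBlock π) x) ∈ genPart π :=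
    Finset.mem_image_of_mem _ hx'
  rw [hgen, Finset.mem_singleton] at hcomp
  exact (Finset.mem_filter.mp (hcomp ▸ hy : y ∈ _)).2

lemma mem_iff_of_genPart_eq_singleton {π : Finset (Finset ℕ)} {G : Finset ℕ}
    (hgen : genPart π = {G}) {S : Set ℕ}
    (hS : ∀ E ∈ π, ∀ x ∈ E, ∀ y ∈ E, x ∈ S → y ∈ S) {x y : ℕ} (hx : x ∈ G) (hy : y ∈ G) :
    x ∈ S ↔ y ∈ S :=
  (eqvGen_sameBlock_of_genPart_eq_singleton hgen hx hy).iff_of_forall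
    fun _ _ ⟨E, hE, haE, hbE⟩ => ⟨hS E hE _ haE _ hbE, hS E hE _ hbE _ haE⟩

lemma eq_of_coverCount_eq_one {π : Finset (Finset ℕ)} {m : ℕ} (h : coverCount π m = 1)
    {A E : Finset ℕ} (hA : A ∈ π) (hmA : m ∈ A) (hE : E ∈ π) (hmE : m ∈ E) : E = A :=
  Finset.card_le_one.mp h.le E (Finset.mem_filter.mpr ⟨hE, hmE⟩) A (Finset.mem_filter.mpr ⟨hA, hmA⟩)

section LinkedPartition

variable {F : Finset ℕ} {π : Finset (Finset ℕ)}

lemma IsLinkedPartitionOfSet.coverCount_le_two (hπ : IsLinkedPartitionOfSet F π) (m : ℕ) :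
    coverCount π m ≤ 2 := by
  by_contra! hgt
  obtain ⟨A₁, h₁, A₂, h₂, A₃, h₃, h₁₂, h₁₃, h₂₃⟩ := Finset.two_lt_card.mp hgt
  have link : ∀ {B C}, B ∈ π.filter (m ∈ ·) → C ∈ π.filter (m ∈ ·) → B ≠ C →
      (m = fmin B ∨ m = fmin C) ∧ fmin B ≠ fmin C := by
    intro B C hB hC hBC
    rw [Finset.mem_filter] at hB hC
    have hmBC : m ∈ B ∩ C := Finset.mem_inter.mpr ⟨hB.2, hC.2⟩
    rcases hπ.2.2.2 B hB.1 C hC.1 hBC with hempty | ⟨-, -, -, hne, hmin⟩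
    · simp [hempty] at hmBC
    · exact ⟨hmin m hmBC, hne⟩
  have := link h₁ h₂ h₁₂
  have := link h₁ h₃ h₁₃
  have := link h₂ h₃ h₂₃
  omega

/-- The points from `m` up to, but excluding, the first point after `m` of a block that also
reaches below `m`. -/
def gapFrom (π : Finset (Finset ℕ)) (m : ℕ) : Set ℕ :=
  {x | m ≤ x ∧ ∀ C ∈ π, ∀ a ∈ C, ∀ t ∈ C, a < m → m < t → x < t}

lemma IsNCLOfSet.mem_gapFrom_of_mem_block (hπ : IsNCLOfSet F π) {m : ℕ}
    (hm : ∀ E ∈ π, m ∈ E → fmin E = m) {E : Finset ℕ} (hE : E ∈ π)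
    {x y : ℕ} (hxE : x ∈ E) (hyE : y ∈ E) (hx : x ∈ gapFrom π m) : y ∈ gapFrom π m := by
  obtain ⟨hmx, hxt⟩ := hx
  have hE_ge : ∀ z ∈ E, m ≤ z := by
    intro z hz
    by_contra! hzm
    rcases hmx.eq_or_lt with rfl | hmx
    · exact hzm.not_ge (hm E hE hxE ▸ fmin_le hz)
    · exact (hxt E hE z hz x hxE hzm hmx).false
  refine ⟨hE_ge y hyE, fun C hC a haC t htC ham hmt => ?_⟩
  by_contra! hty
  have hxt' : x < t := hxt C hC a haC t htC ham hmt
  have hCE : C ≠ E := fun h => (ham.trans_le (hE_ge a (h ▸ haC))).false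
  rcases hty.eq_or_lt with rfl | hty
  -- `t` would be shared by `C` and `E` without being the minimum of either
  · have htCE : t ∈ C ∩ E := Finset.mem_inter.mpr ⟨htC, hyE⟩
    rcases hπ.1.2.2.2 C hC E hE hCE with hempty | ⟨-, -, -, -, hmin⟩
    · simp [hempty] at htCE
    · have := fmin_le haC
      have := fmin_le hxE
      rcases hmin t htCE with h | h <;> omega
  · exact hπ.2 ⟨C, hC, E, hE, hCE, a, haC, x, hxE, t, htC, y, hyE,
      ham.trans_le hmx, hxt', hty⟩

end LinkedPartition

/-- Let `π ∈ NCL(n)` with `π̂ = 1ₙ`, and let `A` be a block of `π`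
with `1 ∉ A`. Then `min A` is doubly-covered by `π`. -/
theorem stmt13 (n : ℕ) (π : Finset (Finset ℕ)) (hπ : IsNCL n π)
    (hgen : genPart π = {Finset.Icc 1 n})
    (A : Finset ℕ) (hA : A ∈ π) (h1 : 1 ∉ A) :
    DoublyCovered π (fmin A) := by
  set m := fmin A
  have hmA : m ∈ A := fmin_mem (hπ.1.1 A hA)
  obtain ⟨hm_pos, hmn⟩ := Finset.mem_Icc.mp (hπ.1.2.1 A hA hmA)
  have hm1 : 1 < m := hm_pos.lt_of_ne fun h => h1 (h ▸ hmA)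
  have hnot_single : coverCount π m ≠ 1 := by
    intro hsingle
    have hm : ∀ E ∈ π, m ∈ E → fmin E = m := fun E hE hmE =>
      congrArg fmin (eq_of_coverCount_eq_one hsingle hA hmA hE hmE)
    have hm_gap : m ∈ gapFrom π m := ⟨le_rfl, fun _ _ _ _ _ _ _ hmt => hmt⟩
    have h1_gap : 1 ∈ gapFrom π m :=
      (mem_iff_of_genPart_eq_singleton hgen
        (fun _ hE _ hx _ hy => hπ.mem_gapFrom_of_mem_block hm hE hx hy)
        (Finset.mem_Icc.mpr ⟨hm_pos, hmn⟩) (Finset.mem_Icc.mpr ⟨le_rfl, hm_pos.trans hmn⟩)).mp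
        hm_gap
    exact h1_gap.1.not_gt hm1
  have hcover : 0 < coverCount π m := Finset.card_pos.mpr ⟨A, Finset.mem_filter.mpr ⟨hA, hmA⟩⟩
  have := hπ.1.coverCount_le_two m
  unfold DoublyCovered
  omega
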